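/- Let X ∈ ℝ^{m×n} be a real matrix with rank(X) = r. Then there exist matrices U ∈ ℝ^{m×r} and V ∈ ℝ^{n×r} with X = UVᵀ such that ‖U‖_* ‖V‖_F = (Σ_i σ_i(X)^{2/3})^{3/2}, i.e., the Schatten-2/3 quasi-norm of X is attained by some factorization. -/

import Mathlib

open Matrix

/-- The singular values of a real matrix `X`, i.e. the nonnegative square roots of the
eigenvalues of `Xᵀ * X` (zero-padded to `n` values; zero singular values contribute `0`
to all the sums below, so this is harmless). -/
noncomputable def singularValues {m n : ℕ} (X : Matrix (Fin m) (Fin n) ℝ) : Fin n → ℝ :=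
  fun i => Real.sqrt (((by simpa [Matrix.conjTranspose_eq_transpose_of_trivial] using
    Matrix.isHermitian_conjTranspose_mul_self X) : (Xᵀ * X).IsHermitian).eigenvalues i)

/-- The nuclear norm `‖X‖_* = Σ_i σ_i(X)`. -/
noncomputable def nuclearNorm {m n : ℕ} (X : Matrix (Fin m) (Fin n) ℝ) : ℝ :=
  ∑ i, singularValues X i

/-- The Frobenius norm `‖X‖_F = (Σ_{i,j} X_{ij}²)^{1/2}`. -/
noncomputable def frobNorm {m n : ℕ} (X : Matrix (Fin m) (Fin n) ℝ) : ℝ :=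
  Real.sqrt (∑ i, ∑ j, (X i j) ^ 2)

/-!
Diagonalize `Xᵀ X = W diag(μ) Wᵀ` with `W` orthogonal. The columns of `X W` are orthogonal with
squared norms `μ`, and those with `μ = 0` vanish, so keeping only the `r = rank X` columns with
`μ ≠ 0` gives a thin SVD `X = L Rᵀ` with `Lᵀ L = diag(σ²)`, `Rᵀ R = 1` and `σ > 0` the nonzero
singular values. Rescaling the columns, `U = L diag(σ^(-1/3))` and `V = R diag(σ^(1/3))`, keeps
`X = U Vᵀ`, while `Uᵀ U = diag(σ^(4/3))` and `Vᵀ V = diag(σ^(2/3))`. Hence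
`‖U‖_* = S := Σ σ^(2/3)` and `‖V‖_F = √S`, whose product is `S^(3/2)`.
-/

namespace Matrix

variable {l m n r : Type*} [Fintype m] [Fintype n] [Fintype r]

section Spectral

variable {𝕜 : Type*} [RCLike 𝕜] [DecidableEq n]

theorem IsHermitian.sum_comp_eigenvalues_of_eq_diagonal {A : Matrix n n 𝕜} (hA : A.IsHermitian)
    {d : n → ℝ} (hd : A = diagonal (RCLike.ofReal ∘ d)) (f : ℝ → ℝ) :
    ∑ i, f (hA.eigenvalues i) = ∑ i, f (d i) := by
  subst hd
  have hroots : Finset.univ.val.map (RCLike.ofReal ∘ d) =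
      Finset.univ.val.map (RCLike.ofReal ∘ hA.eigenvalues : n → 𝕜) := by
    rw [← hA.roots_charpoly_eq_eigenvalues, charpoly_diagonal, Polynomial.roots_prod _ _
      (Finset.prod_ne_zero_iff.mpr fun i _ => Polynomial.X_sub_C_ne_zero _)]
    simp
  have hmap : Finset.univ.val.map hA.eigenvalues = Finset.univ.val.map d :=
    Multiset.map_injective RCLike.ofReal_injective (by simpa [Multiset.map_map] using hroots.symm)
  calc ∑ i, f (hA.eigenvalues i) = ((Finset.univ.val.map hA.eigenvalues).map f).sum := by
        rw [Multiset.map_map]; rfl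
    _ = ∑ i, f (d i) := by rw [hmap, Multiset.map_map]; rfl

theorem exists_factorization_eigenvalues_conjTranspose_mul_self (X : Matrix m n 𝕜) :
    ∃ (P : Matrix m n 𝕜) (W : Matrix n n 𝕜), X = P * Wᴴ ∧
      Pᴴ * P = diagonal (RCLike.ofReal ∘ (isHermitian_conjTranspose_mul_self X).eigenvalues) ∧
      Wᴴ * W = 1 := by
  set hH := isHermitian_conjTranspose_mul_self X
  set W : Matrix n n 𝕜 := (hH.eigenvectorUnitary : Matrix n n 𝕜)
  have hW : W * Wᴴ = 1 := mem_unitaryGroup_iff.mp hH.eigenvectorUnitary.2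
  refine ⟨X * W, W, ?_, ?_, mem_unitaryGroup_iff'.mp hH.eigenvectorUnitary.2⟩
  · rw [Matrix.mul_assoc, hW, Matrix.mul_one]
  · rw [← hH.conjStarAlgAut_star_eigenvectorUnitary, Unitary.conjStarAlgAut_star_apply,
      conjTranspose_mul]
    simp [W, Matrix.mul_assoc, star_eq_conjTranspose]

end Spectral

theorem submatrix_mul_transpose_submatrix_of_transpose_mul_self_eq_diagonal {R : Type*} [Ring R]
    [LinearOrder R] [IsStrictOrderedRing R] [DecidableEq n] {P : Matrix m n R}
    {Q : Matrix l n R} {μ : n → R} (hP : Pᵀ * P = diagonal μ) (f : r ↪ n)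
    (hf : ∀ i ∉ Set.range f, μ i = 0) :
    P.submatrix id f * (Q.submatrix id f)ᵀ = P * Qᵀ := by
  have hcol (i : n) (hi : i ∉ Set.range f) (a : m) : P a i = 0 := by
    have h : Pᵀ i ⬝ᵥ Pᵀ i = 0 := by
      rw [← hf i hi, ← diagonal_apply_eq μ i, ← hP]
      rfl
    exact congrFun (dotProduct_self_eq_zero.mp h) a
  ext a b
  refine Fintype.sum_of_injective f f.injective _ _ (fun i hi => ?_) (fun j => rfl)
  show P a i * Qᵀ i b = 0
  rw [hcol i hi, zero_mul]

theorem exists_rebalanced_factorization [DecidableEq r] {L : Matrix m r ℝ} {R : Matrix n r ℝ}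
    {σ : r → ℝ} (hσ : ∀ j, 0 < σ j) (hL : Lᵀ * L = diagonal fun j => σ j ^ 2)
    (hR : Rᵀ * R = 1) (a : ℝ) :
    ∃ (U : Matrix m r ℝ) (V : Matrix n r ℝ), U * Vᵀ = L * Rᵀ ∧
      Uᵀ * U = diagonal (fun j => σ j ^ (2 - 2 * a)) ∧
      Vᵀ * V = diagonal (fun j => σ j ^ (2 * a)) := by
  refine ⟨L * diagonal fun j => σ j ^ (-a), R * diagonal fun j => σ j ^ a, ?_, ?_, ?_⟩
  · have hinv (j : r) : σ j ^ (-a) * σ j ^ a = 1 := by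
      rw [← Real.rpow_add (hσ j), neg_add_cancel, Real.rpow_zero]
    rw [transpose_mul, diagonal_transpose, Matrix.mul_assoc, ← Matrix.mul_assoc (diagonal _),
      diagonal_mul_diagonal]
    simp only [hinv, diagonal_one, Matrix.one_mul]
  · rw [transpose_mul, diagonal_transpose, Matrix.mul_assoc, ← Matrix.mul_assoc Lᵀ, hL,
      diagonal_mul_diagonal, diagonal_mul_diagonal]
    refine congrArg diagonal (funext fun j => ?_)
    rw [← Real.rpow_two, ← Real.rpow_add (hσ j), ← Real.rpow_add (hσ j)]
    ring_nf
  · rw [transpose_mul, diagonal_transpose, Matrix.mul_assoc, ← Matrix.mul_assoc Rᵀ, hR,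
      Matrix.one_mul, diagonal_mul_diagonal]
    exact congrArg diagonal (funext fun j => by rw [← Real.rpow_add (hσ j), two_mul])

end Matrix

open Matrix

theorem nuclearNorm_eq_sum_sqrt_of_transpose_mul_self_eq_diagonal {m r : ℕ}
    (U : Matrix (Fin m) (Fin r) ℝ) {d : Fin r → ℝ} (h : Uᵀ * U = diagonal d) :
    nuclearNorm U = ∑ j, √(d j) :=
  IsHermitian.sum_comp_eigenvalues_of_eq_diagonal _ h _

theorem frobNorm_eq_sqrt_trace {m n : ℕ} (V : Matrix (Fin m) (Fin n) ℝ) :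
    frobNorm V = √(trace (Vᵀ * V)) := by
  rw [frobNorm, Finset.sum_comm]
  simp [trace, mul_apply, sq]

theorem exists_thin_svd {m n r : ℕ} (X : Matrix (Fin m) (Fin n) ℝ) (hrank : X.rank = r) :
    ∃ (L : Matrix (Fin m) (Fin r) ℝ) (R : Matrix (Fin n) (Fin r) ℝ) (σ : Fin r → ℝ),
      X = L * Rᵀ ∧ Lᵀ * L = diagonal (fun j => σ j ^ 2) ∧ Rᵀ * R = 1 ∧ (∀ j, 0 < σ j) ∧
      ∀ g : ℝ → ℝ, g 0 = 0 → ∑ i, g (singularValues X i) = ∑ j, g (σ j) := by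
  set hH := isHermitian_conjTranspose_mul_self X
  set μ := hH.eigenvalues
  obtain ⟨P, W, hX, hP, hW⟩ := exists_factorization_eigenvalues_conjTranspose_mul_self X
  replace hX : X = P * Wᵀ := hX
  replace hP : Pᵀ * P = diagonal μ := hP
  replace hW : Wᵀ * W = 1 := hW
  have hcard : Fintype.card {i // μ i ≠ 0} = r := by
    rw [← hH.rank_eq_card_non_zero_eigs, rank_conjTranspose_mul_self, hrank]
  set e := Fintype.equivFinOfCardEq hcard
  let f : Fin r ↪ Fin n := e.symm.toEmbedding.trans (Function.Embedding.subtype _)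
  have hf : ∀ i ∉ Set.range f, μ i = 0 := fun i hi =>
    by_contra fun h => hi ⟨e ⟨i, h⟩, by simp [f]⟩
  have hμ : ∀ i, 0 ≤ μ i := eigenvalues_conjTranspose_mul_self_nonneg X
  refine ⟨P.submatrix id f, W.submatrix id f, fun j => √(μ (f j)), ?_, ?_, ?_, ?_, ?_⟩
  · rw [submatrix_mul_transpose_submatrix_of_transpose_mul_self_eq_diagonal hP f hf, hX]
  · rw [transpose_submatrix, ← submatrix_mul _ _ _ _ _ Function.bijective_id, hP,
      submatrix_diagonal_embedding]
    exact congrArg diagonal (funext fun j => (Real.sq_sqrt (hμ _)).symm)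
  · rw [transpose_submatrix, ← submatrix_mul _ _ _ _ _ Function.bijective_id, hW,
      submatrix_one_embedding]
  · exact fun j => Real.sqrt_pos.mpr ((hμ _).lt_of_ne (e.symm j).prop.symm)
  · intro g hg
    refine (Fintype.sum_of_injective f f.injective _ _ (fun i hi => ?_) (fun j => rfl)).symm
    show g √(μ i) = 0
    rw [hf i hi, Real.sqrt_zero, hg]

theorem mul_sqrt_self_eq_rpow_three_halves {x : ℝ} (hx : 0 ≤ x) :
    x * √x = x ^ ((3 : ℝ) / 2) := by
  rw [Real.sqrt_eq_rpow, ← Real.rpow_one_add' hx (by norm_num)]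
  norm_num

/-- For `X` of rank `r`, there is a factorization `X = U Vᵀ` with
`U : m×r`, `V : n×r` attaining `‖U‖_* ‖V‖_F = (Σ_i σ_i(X)^(2/3))^(3/2)`. -/
theorem schatten_two_thirds_attained {m n r : ℕ} (X : Matrix (Fin m) (Fin n) ℝ)
    (hrank : X.rank = r) :
    ∃ (U : Matrix (Fin m) (Fin r) ℝ) (V : Matrix (Fin n) (Fin r) ℝ),
      X = U * Vᵀ ∧
      nuclearNorm U * frobNorm V =
        (∑ i, singularValues X i ^ ((2 : ℝ) / 3)) ^ ((3 : ℝ) / 2) := by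
  obtain ⟨L, R, σ, hX, hL, hR, hσ, hsv⟩ := exists_thin_svd X hrank
  obtain ⟨U, V, hUV, hU, hV⟩ := exists_rebalanced_factorization hσ hL hR (1 / 3)
  refine ⟨U, V, hX.trans hUV.symm, ?_⟩
  have hnuc : nuclearNorm U = ∑ j, σ j ^ ((2 : ℝ) / 3) := by
    rw [nuclearNorm_eq_sum_sqrt_of_transpose_mul_self_eq_diagonal U hU]
    refine Finset.sum_congr rfl fun j _ => ?_
    rw [Real.sqrt_eq_rpow, ← Real.rpow_mul (hσ j).le]
    norm_num
  have hfrob : frobNorm V = √(∑ j, σ j ^ ((2 : ℝ) / 3)) := by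
    rw [frobNorm_eq_sqrt_trace, hV, trace_diagonal]
    norm_num
  have hsum : ∑ i, singularValues X i ^ ((2 : ℝ) / 3) = ∑ j, σ j ^ ((2 : ℝ) / 3) :=
    hsv (· ^ ((2 : ℝ) / 3)) (Real.zero_rpow (by norm_num))
  rw [hnuc, hfrob, hsum, mul_sqrt_self_eq_rpow_three_halves
    (Finset.sum_nonneg fun j _ => (Real.rpow_pos_of_pos (hσ j) _).le)]
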